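/- Let S be a set of primes and n ≥ 1. Suppose Λ is a lattice in (ℝ × ℚ_S)ⁿ ≅ ℝⁿ × ℚ_Sⁿ such that Λ ∩ (ℝⁿ × ℤ_Sⁿ) = ℤⁿ (diagonally embedded). Then Λ = ℤ[1/p : p ∈ S]ⁿ, diagonally embedded in ℝⁿ × ℚ_Sⁿ. -/

import Mathlib

open scoped Classical

noncomputable section

instance factPrimesPrime (q : Nat.Primes) : Fact (q : ℕ).Prime := ⟨q.2⟩

variable (S : Set Nat.Primes)

/-- The additive group of the restricted product `∏'_{p ∈ S} ℚ_p` w.r.t. `ℤ_p`. -/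
def QSgrp : AddSubgroup (∀ p : S, ℚ_[(p.1 : ℕ)]) where
  carrier := {x | {p : S | 1 < ‖x p‖}.Finite}
  zero_mem' := by
    refine Set.Finite.subset Set.finite_empty ?_
    intro p hp
    simp only [Set.mem_setOf_eq, Pi.zero_apply, norm_zero] at hp
    exact absurd hp (by norm_num)
  add_mem' := by
    intro x y hx hy
    refine (hx.union hy).subset ?_
    intro p hp
    by_contra h
    simp only [Set.mem_union, Set.mem_setOf_eq, not_or, not_lt] at h
    exact absurd ((Padic.nonarchimedean (x p) (y p)).trans (max_le h.1 h.2)) (not_le.2 hp)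
  neg_mem' := by
    intro x hx
    have h : {p : S | 1 < ‖(-x) p‖} = {p : S | 1 < ‖x p‖} := by
      ext p; simp
    show Set.Finite _
    rw [h]
    exact hx

/-- The restricted product `ℚ_S = ∏'_{p ∈ S} ℚ_p`. -/
def QS : Type _ := QSgrp S

instance : AddCommGroup (QS S) := inferInstanceAs (AddCommGroup (QSgrp S))

/-- The subset of the full product supported (integrally) outside a finite set `F`. -/
def SFset (F : Finset S) : Set (∀ p : S, ℚ_[(p.1 : ℕ)]) :=
  {x | ∀ p : S, p ∉ F → ‖x p‖ ≤ 1}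

theorem SFset_mem {F : Finset S} {x : ∀ p : S, ℚ_[(p.1 : ℕ)]} (hx : x ∈ SFset S F) :
    x ∈ QSgrp S := by
  refine F.finite_toSet.subset ?_
  intro p hp
  by_contra h
  exact absurd (hx p h) (not_le.2 hp)

/-- The restricted-product topology on `ℚ_S`: the inductive-limit topology of the subspaces
`S_F = {x : ∀ p, ‖x p‖ ≤ 1 for p ∉ F}` (each with the topology induced from the product),
over finite sets `F`.  This is the usual topology on the restricted product, in which
`ℤ_S = ∏_{p ∈ S} ℤ_p` is a compact open subgroup. -/
instance (priority := 2000) QS.topologicalSpace : TopologicalSpace (QS S) :=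
  ⨆ F : Finset S,
    TopologicalSpace.coinduced
      (fun y : SFset S F => (⟨y.1, SFset_mem S y.2⟩ : QS S)) inferInstance

end

noncomputable section
variable (S : Set Nat.Primes)

/-- A rational number, diagonally embedded in `ℚ_S`. -/
def ratQS (r : ℚ) : QS S :=
  ⟨fun p => (r : ℚ_[(p.1 : ℕ)]), by
    refine Set.Finite.subset (Set.Finite.preimage
      (f := fun p : S => ((p.1 : ℕ) : ℤ)) ?_ (Set.finite_Icc (2 : ℤ) r.den)) ?_
    · intro a _ b _ hab
      simp only at hab
      exact Subtype.ext (Subtype.ext (by exact_mod_cast hab))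
    · intro p hp
      simp only [Set.mem_setOf_eq] at hp
      have hdvd : (p.1 : ℕ) ∣ r.den := by
        by_contra h
        exact absurd (Padic.norm_rat_le_one h) (not_le.2 hp)
      constructor
      · show (2 : ℤ) ≤ ((p.1 : ℕ) : ℤ)
        exact_mod_cast p.1.2.two_le
      · show ((p.1 : ℕ) : ℤ) ≤ (r.den : ℤ)
        exact_mod_cast Nat.le_of_dvd r.pos hdvd⟩

/-- The compact open subgroup `ℤ_S = ∏_{p ∈ S} ℤ_p` of `ℚ_S`. -/
def memZS (x : QS S) : Prop := ∀ p : S, ‖x.1 p‖ ≤ 1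

end

/-- A lattice in a topological additive group: a discrete, cocompact subgroup. -/
def IsAddTopLattice {X : Type*} [AddGroup X] [TopologicalSpace X] (Λ : AddSubgroup X) : Prop :=
  DiscreteTopology Λ ∧ CompactSpace (X ⧸ Λ)

/-! Let `G = ℝⁿ × ℚ_Sⁿ` and let `K = ℝⁿ × ℤ_Sⁿ`, an open subgroup. Every `z ∈ Λ` has a multiple
`N • z`, with `N` a product of primes in `S`, lying in `Λ ∩ K = ℤⁿ`; hence `Λ ⊆ ℤ[1/S]ⁿ`.
Conversely, `Λ + K` is open, so `G ⧸ (Λ + K)` is discrete, and it is compact as a quotient of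
`G ⧸ Λ`; thus it is finite. Since `G` is a `ℚ`-vector space, hence divisible, `Λ + K = G`.
Now write `d ∈ ℤ[1/S]ⁿ` as `λ + x` with `λ ∈ Λ ⊆ ℤ[1/S]ⁿ` and `x ∈ K`: then
`x ∈ ℤ[1/S]ⁿ ∩ K = ℤⁿ ⊆ Λ`, so `d ∈ Λ`. -/

theorem Padic.norm_natCast_mul_le_of_dvd {p : ℕ} [Fact p.Prime] {d N : ℕ} (hdN : d ∣ N)
    (y : ℚ_[p]) : ‖(N : ℚ_[p]) * y‖ ≤ ‖(d : ℚ_[p]) * y‖ := by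
  obtain ⟨M, rfl⟩ := hdN
  rw [Nat.cast_mul, mul_comm (d : ℚ_[p]), mul_assoc, norm_mul]
  exact mul_le_of_le_one_left (norm_nonneg _) (by exact_mod_cast Padic.norm_int_le_one (M : ℤ))

theorem Rat.exists_int_eq_of_padicNorm_le_one {r : ℚ}
    (h : ∀ p : Nat.Primes, padicNorm (p : ℕ) r ≤ 1) : ∃ z : ℤ, r = z := by
  refine ⟨r.num, ((Rat.den_eq_one_iff r).mp ?_).symm⟩
  by_contra hden
  set p := r.den.minFac
  have hp : p.Prime := Nat.minFac_prime hden
  have := Fact.mk hp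
  have hnum : padicNorm p r.num = 1 := (padicNorm.int_eq_one_iff _).mpr fun hdvd =>
    hp.ne_one (Nat.Coprime.eq_one_of_dvd
      (r.reduced.coprime_dvd_left (Int.natCast_dvd.mp hdvd)) (Nat.minFac_dvd _))
  have hden_lt : padicNorm p r.den < 1 := (padicNorm.nat_lt_one_iff _).mpr (Nat.minFac_dvd _)
  have hden_pos : 0 < padicNorm p r.den :=
    (padicNorm.nonneg _).lt_of_ne' (padicNorm.nonzero (by exact_mod_cast r.den_nz))
  have hr := h ⟨p, hp⟩
  rw [← Rat.num_div_den r, padicNorm.div, hnum, one_div, inv_le_one₀ hden_pos] at hr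
  exact hr.not_gt hden_lt

namespace AddSubgroup

theorem finite_quotient_of_isOpen_of_le {G : Type*} [AddGroup G] [TopologicalSpace G]
    [SeparatelyContinuousAdd G] {Λ H : AddSubgroup G} [CompactSpace (G ⧸ Λ)]
    (hH : IsOpen (H : Set G)) (hΛH : Λ ≤ H) : Finite (G ⧸ H) := by
  have := QuotientAddGroup.discreteTopology hH
  have hcompat : ∀ a b : G, QuotientAddGroup.leftRel Λ a b → (a : G ⧸ H) = b := fun _ _ hab =>
    QuotientAddGroup.eq.mpr (hΛH (QuotientAddGroup.leftRel_apply.mp hab))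
  have : CompactSpace (G ⧸ H) :=
    Function.Surjective.compactSpace (QuotientAddGroup.continuous_mk.quotient_lift hcompat)
      (.of_comp (g := QuotientAddGroup.mk (s := Λ)) QuotientAddGroup.mk_surjective)
  exact finite_of_compact_of_discrete

theorem eq_top_of_finite_quotient {G : Type*} [AddCommGroup G] [Module ℚ G] (H : AddSubgroup G)
    [Finite (G ⧸ H)] : H = ⊤ := by
  refine eq_top_iff.mpr fun g _ => ?_
  set m := Nat.card (G ⧸ H)
  have hm : (m : ℚ) ≠ 0 := Nat.cast_ne_zero.mpr Nat.card_pos.ne'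
  have hg : g = m • ((m : ℚ)⁻¹ • g) := by rw [← Nat.cast_smul_eq_nsmul ℚ, smul_inv_smul₀ hm]
  rw [← QuotientAddGroup.eq_zero_iff, hg, QuotientAddGroup.mk_nsmul, card_nsmul_eq_zero']

theorem sup_eq_top_of_isOpen {G : Type*} [AddCommGroup G] [Module ℚ G] [TopologicalSpace G]
    [SeparatelyContinuousAdd G] {Λ H : AddSubgroup G} [CompactSpace (G ⧸ Λ)]
    (hH : IsOpen (H : Set G)) : Λ ⊔ H = ⊤ := by
  have : Finite (G ⧸ (Λ ⊔ H)) :=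
    finite_quotient_of_isOpen_of_le (isOpen_mono le_sup_right hH) le_sup_left
  exact eq_top_of_finite_quotient _

end AddSubgroup

namespace QS

variable {S : Set Nat.Primes}

theorem finite_setOf_dvd {m : ℕ} (hm : m ≠ 0) : {p : S | (p.1 : ℕ) ∣ m}.Finite :=
  (m.divisors.finite_toSet.preimage fun _ _ _ _ h => Subtype.ext (Subtype.ext h)).subset
    fun _ hp => Nat.mem_divisors.mpr ⟨hp, hm⟩

variable (S) in
def submodule : Submodule ℚ (∀ p : S, ℚ_[(p.1 : ℕ)]) where
  __ := QSgrp S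
  smul_mem' r x hx := by
    refine (hx.union (finite_setOf_dvd r.den_nz)).subset fun p hp => ?_
    by_contra h
    simp only [Set.mem_union, Set.mem_ofPred_eq, not_or, not_lt] at h
    have : ‖(r : ℚ_[(p.1 : ℕ)])‖ ≤ 1 := Padic.norm_rat_le_one h.2
    simp only [Set.mem_ofPred_eq, Pi.smul_apply, Rat.smul_def, norm_mul] at hp
    nlinarith [norm_nonneg (x p)]

noncomputable instance : Module ℚ (QS S) := inferInstanceAs (Module ℚ (submodule S))

theorem finite_setOf_one_lt_norm (x : QS S) : {p : S | 1 < ‖x.1 p‖}.Finite := x.2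

variable (S) in
def ZS : AddSubgroup (QS S) where
  carrier := {x | memZS S x}
  zero_mem' _ := norm_zero.trans_le zero_le_one
  add_mem' {x y} hx hy p := (IsUltrametricDist.norm_add_le_max (x.1 p) (y.1 p)).trans
    (max_le (hx p) (hy p))
  neg_mem' {x} hx p := (norm_neg (x.1 p)).trans_le (hx p)

def ofSFset (F : Finset S) (y : SFset S F) : QS S := ⟨y.1, SFset_mem S y.2⟩

theorem continuous_ofSFset (F : Finset S) : Continuous (ofSFset F) :=
  continuous_iSup_rng (i := F) continuous_coinduced_rng

theorem isOpen_iff {U : Set (QS S)} : IsOpen U ↔ ∀ F : Finset S, IsOpen (ofSFset F ⁻¹' U) :=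
  isOpen_iSup_iff.trans (forall_congr' fun _ => isOpen_coinduced)

theorem continuous_const_add (x : QS S) : Continuous (x + ·) := by
  refine continuous_iSup_dom.mpr fun F => continuous_coinduced_dom.mpr ?_
  let F' : Finset S := F ∪ x.finite_setOf_one_lt_norm.toFinset
  have hmem (y : SFset S F) : x.1 + y.1 ∈ SFset S F' := fun p hp => by
    simp only [F', Finset.mem_union, Set.Finite.mem_toFinset, Set.mem_ofPred_eq, not_or,
      not_lt] at hp
    exact (IsUltrametricDist.norm_add_le_max _ _).trans (max_le hp.2 (y.2 p hp.1))
  exact (continuous_ofSFset F').comp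
    ((continuous_const.add continuous_subtype_val).subtype_mk hmem)

instance : SeparatelyContinuousAdd (QS S) where
  continuous_const_add := continuous_const_add _
  continuous_add_const {x} := by simpa only [add_comm _ x] using continuous_const_add x

theorem isOpen_ZS : IsOpen (ZS S : Set (QS S)) := by
  refine isOpen_iff.mpr fun F => ?_
  have h : ofSFset F ⁻¹' (ZS S) =
      ⋂ p ∈ F, (fun y : SFset S F => y.1 p) ⁻¹' Metric.closedBall 0 1 := by
    ext y
    simp only [Set.mem_preimage, Set.mem_iInter, Metric.mem_closedBall, dist_zero_right]
    exact ⟨fun h p _ => h p, fun h p => if hp : p ∈ F then h p hp else y.2 p hp⟩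
  rw [h]
  exact isOpen_biInter_finset fun p _ =>
    (IsUltrametricDist.isOpen_closedBall _ one_ne_zero).preimage
      ((continuous_apply p).comp continuous_subtype_val)

theorem exists_nsmul_mem_ZS (x : QS S) :
    ∃ N : ℕ, N ≠ 0 ∧ (∀ ℓ : Nat.Primes, ℓ ∉ S → ¬ (ℓ : ℕ) ∣ N) ∧ N • x ∈ ZS S := by
  choose k hk using fun p : S => (pow_unbounded_of_one_lt ‖x.1 p‖
    (by exact_mod_cast p.1.2.one_lt : (1 : ℝ) < (p.1 : ℕ))).imp fun _ => le_of_lt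
  let F : Finset S := x.finite_setOf_one_lt_norm.toFinset
  refine ⟨∏ p ∈ F, (p.1 : ℕ) ^ k p,
    Finset.prod_ne_zero_iff.mpr fun p _ => pow_ne_zero _ p.1.2.ne_zero, fun ℓ hℓ hdvd => ?_,
    fun p => ?_⟩
  · obtain ⟨p, -, hp⟩ := (Prime.dvd_finsetProd_iff ℓ.2.prime _).mp hdvd
    obtain rfl : ℓ = p.1 :=
      Subtype.ext ((Nat.prime_dvd_prime_iff_eq ℓ.2 p.1.2).mp (ℓ.2.dvd_of_dvd_pow hp))
    exact hℓ p.2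
  · show ‖((∏ p ∈ F, (p.1 : ℕ) ^ k p : ℕ) : ℚ_[(p.1 : ℕ)]) * x.1 p‖ ≤ 1
    by_cases hp : p ∈ F
    · refine (Padic.norm_natCast_mul_le_of_dvd (Finset.dvd_prod_of_mem _ hp) _).trans ?_
      rw [norm_mul, Nat.cast_pow, Padic.norm_p_pow, zpow_neg, zpow_natCast]
      exact inv_mul_le_one_of_le₀ (hk p) (by positivity)
    · refine (Padic.norm_natCast_mul_le_of_dvd (one_dvd _) _).trans ?_
      simpa [F] using hp

end QS

variable (S : Set Nat.Primes) (n : ℕ)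

/-- `ℤ[1/p : p ∈ S]`. -/
def sIntegers : AddSubgroup ℚ where
  carrier := {r | ∀ ℓ : Nat.Primes, ℓ ∉ S → padicNorm (ℓ : ℕ) r ≤ 1}
  zero_mem' ℓ _ := by simp
  add_mem' hr hs ℓ hℓ := padicNorm.nonarchimedean.trans (max_le (hr ℓ hℓ) (hs ℓ hℓ))
  neg_mem' hr ℓ hℓ := (padicNorm.neg _).trans_le (hr ℓ hℓ)

theorem ratQS_mul (r s : ℚ) : ratQS S (r * s) = r • ratQS S s :=
  Subtype.ext (funext fun _ => (Rat.cast_mul r s).trans (Rat.smul_def r _).symm)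

theorem ratQS_add (r s : ℚ) : ratQS S (r + s) = ratQS S r + ratQS S s :=
  Subtype.ext (funext fun _ => Rat.cast_add r s)

noncomputable def diag : (Fin n → ℚ) →ₗ[ℚ] (Fin n → ℝ) × (Fin n → QS S) where
  toFun q := (fun i => (q i : ℝ), fun i => ratQS S (q i))
  map_add' q q' := by ext i <;> simp [ratQS_add]
  map_smul' r q := by ext i <;> simp [ratQS_mul, Rat.smul_def]

theorem diag_intCast (k : Fin n → ℤ) :
    diag S n (fun i => k i) = (fun i => (k i : ℝ), fun i => ratQS S (k i)) := by
  ext i <;> simp [diag]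

def realProdZS : AddSubgroup ((Fin n → ℝ) × (Fin n → QS S)) where
  carrier := {z | ∀ i, memZS S (z.2 i)}
  zero_mem' _ := (QS.ZS S).zero_mem
  add_mem' hz hw i := (QS.ZS S).add_mem (hz i) (hw i)
  neg_mem' hz i := (QS.ZS S).neg_mem (hz i)

theorem isOpen_realProdZS : IsOpen (realProdZS S n : Set ((Fin n → ℝ) × (Fin n → QS S))) := by
  rw [show (realProdZS S n : Set ((Fin n → ℝ) × (Fin n → QS S))) =
      ⋂ i, (fun z => z.2 i) ⁻¹' QS.ZS S from Set.ext fun _ => by rw [Set.mem_iInter]; rfl]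
  exact isOpen_iInter_of_finite fun i =>
    QS.isOpen_ZS.preimage ((continuous_apply i).comp continuous_snd)

theorem exists_nsmul_mem_realProdZS (z : (Fin n → ℝ) × (Fin n → QS S)) :
    ∃ N : ℕ, N ≠ 0 ∧ (∀ ℓ : Nat.Primes, ℓ ∉ S → ¬ (ℓ : ℕ) ∣ N) ∧ N • z ∈ realProdZS S n := by
  choose N hN0 hNS hN using fun i => QS.exists_nsmul_mem_ZS (z.2 i)
  refine ⟨∏ i, N i, Finset.prod_ne_zero_iff.mpr fun i _ => hN0 i, fun ℓ hℓ hdvd => ?_,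
    fun i => ?_⟩
  · obtain ⟨i, -, hi⟩ := (Prime.dvd_finsetProd_iff ℓ.2.prime _).mp hdvd
    exact hNS i ℓ hℓ hi
  · obtain ⟨c, hc⟩ := Finset.dvd_prod_of_mem N (Finset.mem_univ i)
    show (∏ i, N i) • z.2 i ∈ QS.ZS S
    rw [hc, mul_nsmul]
    exact (QS.ZS S).nsmul_mem (hN i) c

theorem padicNorm_le_one_of_diag_mem_realProdZS {q : Fin n → ℚ}
    (hq : diag S n q ∈ realProdZS S n) (i : Fin n) {p : Nat.Primes} (hp : p ∈ S) :
    padicNorm (p : ℕ) (q i) ≤ 1 := by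
  have h : ‖((q i : ℚ) : ℚ_[(p : ℕ)])‖ ≤ 1 := hq i ⟨p, hp⟩
  rwa [Padic.eq_padicNorm, ← Rat.cast_one, Rat.cast_le] at h

variable {S n} {Λ : AddSubgroup ((Fin n → ℝ) × (Fin n → QS S))}

theorem exists_eq_diag_of_mem
    (hint : (Λ : Set ((Fin n → ℝ) × (Fin n → QS S))) ∩ realProdZS S n =
      Set.range fun k : Fin n → ℤ => diag S n (fun i => k i))
    {z : (Fin n → ℝ) × (Fin n → QS S)} (hz : z ∈ Λ) :
    ∃ q : Fin n → ℚ, (∀ i, q i ∈ sIntegers S) ∧ z = diag S n q := by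
  obtain ⟨N, hN0, hNS, hNz⟩ := exists_nsmul_mem_realProdZS S n z
  obtain ⟨k, hk : diag S n _ = N • z⟩ := hint.le ⟨Λ.nsmul_mem hz N, hNz⟩
  refine ⟨(N : ℚ)⁻¹ • fun i => (k i : ℚ), fun i ℓ hℓ => ?_, ?_⟩
  · rw [Pi.smul_apply, smul_eq_mul, ← div_eq_inv_mul, padicNorm.div,
      (padicNorm.nat_eq_one_iff N).mpr (hNS ℓ hℓ), div_one]
    exact padicNorm.of_int _
  · rw [map_smul, hk, ← Nat.cast_smul_eq_nsmul ℚ, inv_smul_smul₀ (Nat.cast_ne_zero.mpr hN0)]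

theorem diag_mem_of_mem_realProdZS
    (hint : (Λ : Set ((Fin n → ℝ) × (Fin n → QS S))) ∩ realProdZS S n =
      Set.range fun k : Fin n → ℤ => diag S n (fun i => k i))
    {q : Fin n → ℚ} (hq : ∀ i, q i ∈ sIntegers S) (hqK : diag S n q ∈ realProdZS S n) :
    diag S n q ∈ Λ := by
  choose k hk using fun i => Rat.exists_int_eq_of_padicNorm_le_one fun p =>
    if hp : p ∈ S then padicNorm_le_one_of_diag_mem_realProdZS S n hqK i hp else hq i p hp
  obtain rfl : q = fun i => (k i : ℚ) := funext hk
  exact (hint.ge ⟨k, rfl⟩).1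

theorem stmt19_general (S : Set Nat.Primes) (n : ℕ)
    (Λ : AddSubgroup ((Fin n → ℝ) × (Fin n → QS S))) (hΛ : IsAddTopLattice Λ)
    (hint : (Λ : Set ((Fin n → ℝ) × (Fin n → QS S))) ∩
        {z | ∀ i : Fin n, memZS S (z.2 i)} =
      Set.range (fun k : Fin n → ℤ =>
        ((fun i => (k i : ℝ), fun i => ratQS S (k i)) :
          (Fin n → ℝ) × (Fin n → QS S)))) :
    (Λ : Set ((Fin n → ℝ) × (Fin n → QS S))) =
      {z | ∃ q : Fin n → ℚ,
        (∀ i : Fin n, ∀ ℓ : Nat.Primes, ℓ ∉ S → padicNorm (ℓ : ℕ) (q i) ≤ 1) ∧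
        z = ((fun i => (q i : ℝ)), fun i => ratQS S (q i))} := by
  replace hint : (Λ : Set ((Fin n → ℝ) × (Fin n → QS S))) ∩ realProdZS S n =
      Set.range fun k : Fin n → ℤ => diag S n (fun i => k i) :=
    hint.trans (by simp only [diag_intCast])
  have : CompactSpace (((Fin n → ℝ) × (Fin n → QS S)) ⧸ Λ) := hΛ.2
  have hsup : Λ ⊔ realProdZS S n = ⊤ :=
    AddSubgroup.sup_eq_top_of_isOpen (isOpen_realProdZS S n)
  ext z
  refine ⟨exists_eq_diag_of_mem hint, ?_⟩
  rintro ⟨q, hq, rfl⟩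
  show diag S n q ∈ Λ
  obtain ⟨l, hl, x, hx, hlx⟩ :=
    AddSubgroup.mem_sup.mp (hsup ▸ AddSubgroup.mem_top (diag S n q))
  obtain ⟨q', hq', rfl⟩ := exists_eq_diag_of_mem hint hl
  obtain rfl : x = diag S n (q - q') := by rw [map_sub, ← hlx, add_sub_cancel_left]
  rw [← hlx]
  exact Λ.add_mem hl (diag_mem_of_mem_realProdZS hint (fun i => sub_mem (hq i) (hq' i)) hx)

/-- If `Λ` is a lattice in `ℝⁿ × ℚ_Sⁿ` with
`Λ ∩ (ℝⁿ × ℤ_Sⁿ) = ℤⁿ` (diagonally embedded), then `Λ = ℤ[1/p : p ∈ S]ⁿ` (diagonally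
embedded), where `ℤ[1/p : p ∈ S]` is the set of rationals `q` with `|q|_ℓ ≤ 1` for every
prime `ℓ ∉ S`. -/
theorem stmt19 (S : Set Nat.Primes) (n : ℕ) (hn : 1 ≤ n)
    (Λ : AddSubgroup ((Fin n → ℝ) × (Fin n → QS S))) (hΛ : IsAddTopLattice Λ)
    (hint : (Λ : Set ((Fin n → ℝ) × (Fin n → QS S))) ∩
        {z | ∀ i : Fin n, memZS S (z.2 i)} =
      Set.range (fun k : Fin n → ℤ =>
        ((fun i => (k i : ℝ), fun i => ratQS S (k i)) :
          (Fin n → ℝ) × (Fin n → QS S)))) :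
    (Λ : Set ((Fin n → ℝ) × (Fin n → QS S))) =
      {z | ∃ q : Fin n → ℚ,
        (∀ i : Fin n, ∀ ℓ : Nat.Primes, ℓ ∉ S → padicNorm (ℓ : ℕ) (q i) ≤ 1) ∧
        z = ((fun i => (q i : ℝ)), fun i => ratQS S (q i))} :=
  stmt19_general S n Λ hΛ hint
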